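/- Let a, b ∈ ℝ with −a < b < a, and set μ = √(a−b), ν = √(a+b). Every twice differentiable solution of the homogeneous equation x''(t) + a·x(t) + b·x(−t) = 0 on ℝ has the form x(t) = k₁ sin(μt) + k₂ cos(νt) for some constants k₁, k₂ ∈ ℝ; conversely every such function is a solution. In particular every solution of the homogeneous equation is bounded and almost periodic. -/

import Mathlib

def RelativelyDense (S : Set ℝ) : Prop :=
  ∃ L > 0, ∀ x : ℝ, ∃ τ ∈ S, τ ∈ Set.Icc x (x + L)

def AlmostPeriodic (g : ℝ → ℝ) : Prop :=
  Continuous g ∧ ∀ ε > 0, RelativelyDense {τ : ℝ | ∀ t : ℝ, |g (t + τ) - g t| < ε}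

/-!
Reflection splits the equation: with `w t = x (-t)` we have `w'' = -(a w + b x)`, so `x - w` and
`x + w` solve the harmonic-oscillator equations with frequencies `μ = √(a - b)` and `ν = √(a + b)`.
Conservation of energy determines each from its initial data, and since `x - w` is odd and `x + w`
is even, only `sin (μ t)` and `cos (ν t)` survive. For almost periodicity, `x` is a continuous
function of the point `(μ t, ν t)` of the compact torus; a finite net of the orbit in the torus
makes the almost periods relatively dense.
-/

open Real Topology

theorem HasDerivAt.comp_neg {f : ℝ → ℝ} {f' t : ℝ} (h : HasDerivAt f f' (-t)) :
    HasDerivAt (fun s => f (-s)) (-f') t := by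
  simpa [Function.comp_def] using h.comp t (hasDerivAt_neg t)

theorem hasDerivAt_sin_add_cos (c₁ c₂ α β t : ℝ) :
    HasDerivAt (fun s => c₁ * sin (α * s) + c₂ * cos (β * s))
      (-(c₂ * β) * sin (β * t) + c₁ * α * cos (α * t)) t := by
  have hs := ((hasDerivAt_id t).const_mul α).sin.const_mul c₁
  have hc := ((hasDerivAt_id t).const_mul β).cos.const_mul c₂
  exact (hs.add hc).congr_deriv (by simp only [id]; ring)

theorem deriv_sin_add_cos (c₁ c₂ α β : ℝ) :
    deriv (fun s => c₁ * sin (α * s) + c₂ * cos (β * s))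
      = fun t => -(c₂ * β) * sin (β * t) + c₁ * α * cos (α * t) :=
  funext fun t => (hasDerivAt_sin_add_cos c₁ c₂ α β t).deriv

theorem differentiable_sin_add_cos (c₁ c₂ α β : ℝ) :
    Differentiable ℝ fun s => c₁ * sin (α * s) + c₂ * cos (β * s) :=
  fun t => (hasDerivAt_sin_add_cos c₁ c₂ α β t).differentiableAt

section HarmonicOscillator

variable {ω : ℝ} {u u' : ℝ → ℝ}

theorem harmonic_eq_zero (hω : ω ≠ 0) (hu : ∀ t, HasDerivAt u (u' t) t)
    (hu' : ∀ t, HasDerivAt u' (-(ω ^ 2 * u t)) t) (h₀ : u 0 = 0) (h₀' : u' 0 = 0) (t : ℝ) :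
    u t = 0 := by
  -- conservation of energy
  have hE : ∀ s, HasDerivAt (fun r => u' r ^ 2 + ω ^ 2 * u r ^ 2) 0 s := fun s =>
    (((hu' s).fun_pow 2).add (((hu s).fun_pow 2).const_mul (ω ^ 2))).congr_deriv (by ring)
  have hconst := is_const_of_deriv_eq_zero (fun s => (hE s).differentiableAt)
    (fun s => (hE s).deriv) t 0
  simp only [h₀, h₀'] at hconst
  have : ω ^ 2 * u t ^ 2 = 0 := by nlinarith [sq_nonneg (u' t), sq_nonneg (ω * u t)]
  simpa [hω] using this

theorem harmonic_eq_sin_add_cos (hω : ω ≠ 0) (hu : ∀ t, HasDerivAt u (u' t) t)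
    (hu' : ∀ t, HasDerivAt u' (-(ω ^ 2 * u t)) t) (t : ℝ) :
    u t = u' 0 / ω * sin (ω * t) + u 0 * cos (ω * t) := by
  set c₁ := u' 0 / ω
  set c₂ := u 0
  have hd : ∀ s, HasDerivAt (fun r => u r - (c₁ * sin (ω * r) + c₂ * cos (ω * r)))
      (u' s - (-(c₂ * ω) * sin (ω * s) + c₁ * ω * cos (ω * s))) s :=
    fun s => (hu s).sub (hasDerivAt_sin_add_cos c₁ c₂ ω ω s)
  have hd' : ∀ s, HasDerivAt (fun r => u' r - (-(c₂ * ω) * sin (ω * r) + c₁ * ω * cos (ω * r)))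
      (-(ω ^ 2 * (u s - (c₁ * sin (ω * s) + c₂ * cos (ω * s))))) s := fun s =>
    ((hu' s).sub (hasDerivAt_sin_add_cos (-(c₂ * ω)) (c₁ * ω) ω ω s)).congr_deriv (by ring)
  have := harmonic_eq_zero hω hd hd' (by simp [c₂]) (by simp [c₁, hω]) t
  linarith

end HarmonicOscillator

section Reflection

variable {a b μ ν : ℝ}

theorem eq_sin_add_cos_of_reflected_ode (hμ : μ ≠ 0) (hν : ν ≠ 0) (hμ2 : μ ^ 2 = a - b)
    (hν2 : ν ^ 2 = a + b) {x x' : ℝ → ℝ} (hx : ∀ t, HasDerivAt x (x' t) t)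
    (hx' : ∀ t, HasDerivAt x' (-(a * x t + b * x (-t))) t) (t : ℝ) :
    x t = x' 0 / μ * sin (μ * t) + x 0 * cos (ν * t) := by
  have hodd := harmonic_eq_sin_add_cos hμ (u := fun s => x s - x (-s))
    (u' := fun s => x' s + x' (-s))
    (fun s => (hx s).sub (hx (-s)).comp_neg |>.congr_deriv (by ring))
    (fun s => ((hx' s).add (hx' (-s)).comp_neg).congr_deriv (by simp only [hμ2, neg_neg]; ring)) t
  have heven := harmonic_eq_sin_add_cos hν (u := fun s => x s + x (-s))
    (u' := fun s => x' s - x' (-s))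
    (fun s => (hx s).add (hx (-s)).comp_neg |>.congr_deriv (by ring))
    (fun s => ((hx' s).sub (hx' (-s)).comp_neg).congr_deriv (by simp only [hν2, neg_neg]; ring)) t
  simp only [neg_zero, sub_self] at hodd heven
  linear_combination (hodd + heven) / 2

theorem sin_add_cos_solves_reflected_ode (hμ2 : μ ^ 2 = a - b) (hν2 : ν ^ 2 = a + b) (k₁ k₂ t : ℝ) :
    deriv (deriv fun s => k₁ * sin (μ * s) + k₂ * cos (ν * s)) t +
      a * (k₁ * sin (μ * t) + k₂ * cos (ν * t)) +
      b * (k₁ * sin (μ * -t) + k₂ * cos (ν * -t)) = 0 := by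
  rw [deriv_sin_add_cos, deriv_sin_add_cos, mul_neg, mul_neg, sin_neg, cos_neg]
  linear_combination (-(k₁ * sin (μ * t))) * hμ2 + (-(k₂ * cos (ν * t))) * hν2

end Reflection

theorem RelativelyDense.mono {S T : Set ℝ} (hS : RelativelyDense S) (hST : S ⊆ T) :
    RelativelyDense T := by
  obtain ⟨L, hL, h⟩ := hS
  exact ⟨L, hL, fun x => (h x).imp fun τ hτ => ⟨hST hτ.1, hτ.2⟩⟩

section AlmostPeriodic

variable {G : Type*} [AddCommGroup G] [UniformSpace G] [IsUniformAddGroup G] [CompactSpace G]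

theorem relativelyDense_preimage_of_mem_nhds_zero (Φ : ℝ →+ G) {U : Set G} (hU : U ∈ 𝓝 0) :
    RelativelyDense (Φ ⁻¹' U) := by
  -- A finite `U`-net `Φ σ₁, …, Φ σₙ` of the range of `Φ` gives, for every `x`, some `x - σᵢ` in `Φ ⁻¹' U`.
  have hd : {p : G × G | p.1 - p.2 ∈ U} ∈ uniformity G := by
    rw [uniformity_eq_comap_nhds_zero_swapped]
    exact Filter.preimage_mem_comap hU
  obtain ⟨T, hTΦ, hTfin, hcover⟩ := totallyBounded_iff_subset.1
    (isCompact_univ.totallyBounded.subset (Set.subset_univ (Set.range Φ))) _ hd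
  choose! σ hσ using fun y (hy : y ∈ T) => Set.mem_range.1 (hTΦ hy)
  obtain ⟨R, hR⟩ := (hTfin.image fun y => |σ y|).bddAbove
  refine ⟨2 * |R| + 1, by positivity, fun x₀ => ?_⟩
  obtain ⟨y, hyT, hy⟩ := Set.mem_iUnion₂.1 (hcover (Set.mem_range_self (x₀ + |R|)))
  have hσR : |σ y| ≤ |R| := (hR ⟨y, hyT, rfl⟩).trans (le_abs_self R)
  refine ⟨x₀ + |R| - σ y, ?_, ?_, ?_⟩
  · simpa [map_sub, hσ y hyT] using hy
  · linarith [le_abs_self (σ y)]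
  · linarith [neg_abs_le (σ y)]

theorem almostPeriodic_comp_addMonoidHom {F : G → ℝ} (hF : Continuous F) {Φ : ℝ →+ G}
    (hΦ : Continuous Φ) : AlmostPeriodic (F ∘ Φ) := by
  refine ⟨hF.comp hΦ, fun ε hε => ?_⟩
  have hFε := CompactSpace.uniformContinuous_of_continuous hF (Metric.dist_mem_uniformity hε)
  rw [uniformity_eq_comap_nhds_zero] at hFε
  obtain ⟨U, hU, hUε⟩ := hFε
  refine (relativelyDense_preimage_of_mem_nhds_zero Φ hU).mono fun τ hτ t => ?_
  have := @hUε (Φ t, Φ (t + τ)) (by simpa [map_add] using hτ)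
  simpa [Real.dist_eq, abs_sub_comm] using this

end AlmostPeriodic

instance : CompactSpace Angle :=
  have : Fact (0 < 2 * π) := ⟨two_pi_pos⟩
  AddCircle.compactSpace (2 * π)

theorem sin_add_cos_bounded_and_almostPeriodic (k₁ k₂ μ ν : ℝ) :
    (∃ M : ℝ, ∀ t : ℝ, |k₁ * sin (μ * t) + k₂ * cos (ν * t)| ≤ M) ∧
      AlmostPeriodic fun t => k₁ * sin (μ * t) + k₂ * cos (ν * t) := by
  let F : Angle × Angle → ℝ := fun θ => k₁ * θ.1.sin + k₂ * θ.2.cos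
  let Φ : ℝ →+ Angle × Angle :=
    (Angle.coeHom.comp (AddMonoidHom.mulLeft μ)).prod (Angle.coeHom.comp (AddMonoidHom.mulLeft ν))
  have hF : Continuous F :=
    (continuous_const.mul (Angle.continuous_sin.comp continuous_fst)).add
      (continuous_const.mul (Angle.continuous_cos.comp continuous_snd))
  have hΦ : Continuous Φ :=
    (Angle.continuous_coe.comp (continuous_const_mul μ)).prodMk
      (Angle.continuous_coe.comp (continuous_const_mul ν))
  have hFΦ : (fun t => k₁ * sin (μ * t) + k₂ * cos (ν * t)) = F ∘ Φ := funext fun t => by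
    simp [F, Φ]
  obtain ⟨M, hM⟩ := isCompact_univ.exists_bound_of_continuousOn hF.continuousOn
  refine ⟨⟨M, fun t => ?_⟩, hFΦ ▸ almostPeriodic_comp_addMonoidHom hF hΦ⟩
  rw [congrFun hFΦ t, ← Real.norm_eq_abs]
  exact hM _ (Set.mem_univ _)

theorem homogeneous_general_solution (a b : ℝ) (hba : -a < b) (hab : b < a)
    (μ ν : ℝ) (hμ : μ = Real.sqrt (a - b)) (hν : ν = Real.sqrt (a + b)) :
    (∀ x : ℝ → ℝ, Differentiable ℝ x → Differentiable ℝ (deriv x) →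
      (∀ t : ℝ, deriv (deriv x) t + a * x t + b * x (-t) = 0) →
      ∃ k₁ k₂ : ℝ, ∀ t : ℝ, x t = k₁ * Real.sin (μ * t) + k₂ * Real.cos (ν * t)) ∧
    (∀ k₁ k₂ : ℝ,
      (Differentiable ℝ fun t : ℝ => k₁ * Real.sin (μ * t) + k₂ * Real.cos (ν * t)) ∧
      (Differentiable ℝ (deriv fun t : ℝ => k₁ * Real.sin (μ * t) + k₂ * Real.cos (ν * t))) ∧
      ∀ t : ℝ, deriv (deriv fun s : ℝ => k₁ * Real.sin (μ * s) + k₂ * Real.cos (ν * s)) t +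
        a * (k₁ * Real.sin (μ * t) + k₂ * Real.cos (ν * t)) +
        b * (k₁ * Real.sin (μ * -t) + k₂ * Real.cos (ν * -t)) = 0) ∧
    (∀ x : ℝ → ℝ, Differentiable ℝ x → Differentiable ℝ (deriv x) →
      (∀ t : ℝ, deriv (deriv x) t + a * x t + b * x (-t) = 0) →
      (∃ M : ℝ, ∀ t : ℝ, |x t| ≤ M) ∧ AlmostPeriodic x) := by
  have hμ0 : μ ≠ 0 := hμ ▸ (sqrt_pos.2 (by linarith)).ne'
  have hν0 : ν ≠ 0 := hν ▸ (sqrt_pos.2 (by linarith)).ne'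
  have hμ2 : μ ^ 2 = a - b := hμ ▸ sq_sqrt (by linarith)
  have hν2 : ν ^ 2 = a + b := hν ▸ sq_sqrt (by linarith)
  have solution (x : ℝ → ℝ) (hx : Differentiable ℝ x) (hx' : Differentiable ℝ (deriv x))
      (hx'' : ∀ t, deriv (deriv x) t + a * x t + b * x (-t) = 0) (t : ℝ) :
      x t = deriv x 0 / μ * sin (μ * t) + x 0 * cos (ν * t) :=
    eq_sin_add_cos_of_reflected_ode hμ0 hν0 hμ2 hν2 (fun s => (hx s).hasDerivAt)
      (fun s => (hx' s).hasDerivAt.congr_deriv (by linarith [hx'' s])) t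
  refine ⟨fun x hx hx' hx'' => ⟨_, _, solution x hx hx' hx''⟩, fun k₁ k₂ => ⟨?_, ?_, ?_⟩,
    fun x hx hx' hx'' => ?_⟩
  · exact differentiable_sin_add_cos k₁ k₂ μ ν
  · rw [deriv_sin_add_cos]
    exact differentiable_sin_add_cos _ _ ν μ
  · exact sin_add_cos_solves_reflected_ode hμ2 hν2 k₁ k₂
  rw [funext (solution x hx hx' hx'')]
  exact sin_add_cos_bounded_and_almostPeriodic _ _ μ ν
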